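/- arXiv:2511.12679 — 5 statements merged into one kernel-verified Lean document; each statement's English description precedes it below -/
import Mathlib

section
/- There exists an approach region ending at the boundary point w = 1 of the unit disc that is attached at w but not curvilinear at w. For example, A = (0,1) ∪ ⋃_{n≥2} {(1 − 1/n)·e^{iθ} : 0 ≤ θ < 1/n} is attached at 1, but for every r > 0 the set (A ∪ {1}) ∩ closure(B(1,r)) is not compact, which rules out A being curvilinear at 1. -/
open Metric Set Filter Topology

noncomputable section

def unitDisc : Set ℂ := {z | ‖z‖ < 1}

/-- `A` and `S` have the same germ at `w`. -/
def SameGerm (w : ℂ) (A S : Set ℂ) : Prop :=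
  ∃ r > 0, A ∩ ball w r = S ∩ ball w r

/-- `A` is attached at `w`. -/
def Attached (w : ℂ) (A : Set ℂ) : Prop :=
  ∃ S : Set ℂ, S ⊆ unitDisc ∧ IsConnected (insert w S) ∧ SameGerm w A S

/-- `A` is curvilinear at `w`. -/
def Curvilinear (w : ℂ) (A : Set ℂ) : Prop :=
  ∃ φ : ℝ → ℂ, ContinuousOn φ (Ico 0 1) ∧ (∀ s ∈ Ico (0:ℝ) 1, φ s ∈ unitDisc) ∧
    Tendsto φ (nhdsWithin 1 (Ico (0:ℝ) 1)) (nhds w) ∧ SameGerm w A (φ '' Ico 0 1)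

/-- The example region: the radius `(0,1)` together with the circular arcs
`{(1 − 1/n)·e^{iθ} : 0 ≤ θ < 1/n}` for `n ≥ 2`. -/
def A6 : Set ℂ :=
  ((fun x : ℝ => (x : ℂ)) '' Ioo 0 1) ∪
    ⋃ n : ℕ, ⋃ (_ : 2 ≤ n),
      (fun θ : ℝ => ((1 - 1/(n:ℝ) : ℝ) : ℂ) * Complex.exp (θ * Complex.I)) '' Ico 0 (1/(n:ℝ))

/-!
The radius and every arc are connected and each arc starts on the radius, so `A6` is connected;
since it accumulates at `1`, adding `1` keeps it connected, which makes `A6` attached at `1`.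
The `n`-th arc is open at its far end `(1 - 1/n) e^{i/n}`, a point within `2/n` of `1` that lies
on no other piece of `A6`: so no closed ball around `1` meets `A6 ∪ {1}` in a closed set.
A curvilinear germ, in contrast, is locally the continuous image of `[0, 1]` (extend the path by
its limit `w` at `1`), hence has compact closed local pieces.
-/

lemma isCompact_insert_image_Ico {X : Type*} [TopologicalSpace X] {φ : ℝ → X} {a b : ℝ} {w : X}
    (hab : a ≤ b) (hφ : ContinuousOn φ (Ico a b)) (hlim : Tendsto φ (𝓝[Ico a b] b) (𝓝 w)) :
    IsCompact (insert w (φ '' Ico a b)) := by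
  classical
  have hcont : ContinuousOn (Function.update φ b w) (Icc a b) :=
    continuousOn_update_iff.2 ⟨by rwa [Icc_sdiff_right], fun _ => by rwa [Icc_sdiff_right]⟩
  have himage : Function.update φ b w '' Icc a b = insert w (φ '' Ico a b) := by
    rw [← Ico_insert_right hab, image_insert_eq, Function.update_self]
    congr 1
    exact EqOn.image_eq fun s hs => Function.update_of_ne hs.2.ne _ _
  exact himage ▸ isCompact_Icc.image_of_continuousOn hcont

lemma IsPreconnected.union_biUnion {X ι : Type*} [TopologicalSpace X] {R : Set X} {t : Set ι}
    {s : ι → Set X} (hR : IsPreconnected R) (hs : ∀ i ∈ t, IsPreconnected (s i))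
    (hRs : ∀ i ∈ t, (R ∩ s i).Nonempty) : IsPreconnected (R ∪ ⋃ i ∈ t, s i) := by
  rcases R.eq_empty_or_nonempty with rfl | ⟨x, hx⟩
  · have ht : t = ∅ := eq_empty_of_forall_notMem fun i hi => by simpa using hRs i hi
    simpa [ht] using isPreconnected_empty
  refine isPreconnected_of_forall x fun y hy => ?_
  rcases hy with hy | hy
  · exact ⟨R, subset_union_left, hx, hy, hR⟩
  obtain ⟨i, hi, hy⟩ := mem_iUnion₂.1 hy
  exact ⟨R ∪ s i, union_subset_union_right _ (subset_biUnion_of_mem hi), Or.inl hx, Or.inr hy,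
    hR.union' (hRs i hi) (hs i hi)⟩

lemma Curvilinear.eventually_isCompact {w : ℂ} {A : Set ℂ} (h : Curvilinear w A) :
    ∀ᶠ r in 𝓝[>] 0, IsCompact (insert w A ∩ closure (ball w r)) := by
  obtain ⟨φ, hφ, -, hlim, r₀, hr₀, hgerm⟩ := h
  filter_upwards [Ioo_mem_nhdsGT hr₀] with r hr
  have hsub : closure (ball w r) ⊆ ball w r₀ :=
    closure_ball_subset_closedBall.trans (closedBall_subset_ball hr.2)
  have hw : w ∈ closure (ball w r) := subset_closure (mem_ball_self hr.1)
  have hlocal : A ∩ closure (ball w r) = φ '' Ico 0 1 ∩ closure (ball w r) := by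
    rw [← inter_eq_right.2 hsub, ← inter_assoc, hgerm, inter_assoc]
  rw [insert_inter_of_mem hw, hlocal, ← insert_inter_of_mem hw]
  exact (isCompact_insert_image_Ico zero_le_one hφ hlim).inter_right isClosed_closure

namespace A6

def arc (n : ℕ) (θ : ℝ) : ℂ :=
  ((1 - 1/(n:ℝ) : ℝ) : ℂ) * Complex.exp (θ * Complex.I)

lemma continuous_arc (n : ℕ) : Continuous (arc n) := by
  unfold arc; fun_prop

lemma norm_arc (n : ℕ) (θ : ℝ) : ‖arc n θ‖ = 1 - 1/n := by
  have : (1:ℝ)/n ≤ 1 := by simpa using Nat.cast_inv_le_one (α := ℝ) n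
  rw [arc, norm_mul, Complex.norm_exp_ofReal_mul_I, mul_one, Complex.norm_real,
    Real.norm_of_nonneg (by linarith)]

lemma one_div_mem_Ioc {n : ℕ} (hn : 2 ≤ n) : (1:ℝ)/n ∈ Ioc 0 (1/2) :=
  ⟨one_div_pos.2 (by exact_mod_cast (two_pos.trans_le hn)),
    one_div_le_one_div_of_le two_pos (by exact_mod_cast hn)⟩

lemma arg_arc {n : ℕ} (hn : 2 ≤ n) {θ : ℝ} (hθ : θ ∈ Ioc (-Real.pi) Real.pi) :
    (arc n θ).arg = θ := by
  have := one_div_mem_Ioc hn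
  rw [arc, Complex.arg_real_mul _ (by linarith [this.2]), Complex.arg_exp_mul_I,
    toIocMod_eq_self]
  exact ⟨hθ.1, by linarith [hθ.2]⟩

lemma dist_arc_one_le (n : ℕ) (θ : ℝ) : dist (arc n θ) 1 ≤ 1/n + |θ| := by
  have hradial : dist (arc n θ) (Complex.exp (θ * Complex.I)) = 1/n := by
    rw [Complex.dist_eq, arc, ← sub_one_mul, norm_mul, Complex.norm_exp_ofReal_mul_I, mul_one]
    simp
  have hangular : dist (Complex.exp (θ * Complex.I)) 1 ≤ |θ| := by
    rw [Complex.dist_eq, mul_comm]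
    exact Real.norm_exp_I_mul_ofReal_sub_one_le
  linarith [dist_triangle (arc n θ) (Complex.exp (θ * Complex.I)) 1]

lemma mem_iff {z : ℂ} : z ∈ A6 ↔
    (∃ x ∈ Ioo (0:ℝ) 1, (x:ℂ) = z) ∨ ∃ n : ℕ, 2 ≤ n ∧ ∃ θ ∈ Ico 0 (1/(n:ℝ)), arc n θ = z := by
  simp only [A6, mem_union, mem_image, mem_iUnion, exists_prop, arc]

lemma arc_mem {n : ℕ} (hn : 2 ≤ n) {θ : ℝ} (hθ : θ ∈ Ico 0 (1/(n:ℝ))) : arc n θ ∈ A6 :=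
  Or.inr (mem_iUnion₂.2 ⟨n, hn, mem_image_of_mem _ hθ⟩)

lemma subset_unitDisc : A6 ⊆ unitDisc := by
  intro z hz
  rcases mem_iff.1 hz with ⟨x, hx, rfl⟩ | ⟨n, hn, θ, -, rfl⟩
  · simpa [unitDisc, abs_of_pos hx.1] using hx.2
  · show ‖arc n θ‖ < 1
    linarith [norm_arc n θ, (one_div_mem_Ioc hn).1]

/-- Only the radius and the `n`-th arc meet the circle of radius `1 - 1/n`. -/
lemma arg_lt_of_norm_eq {n : ℕ} (hn : 2 ≤ n) {z : ℂ} (hz : z ∈ A6) (hnorm : ‖z‖ = 1 - 1/n) :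
    z.arg < 1/n := by
  rcases mem_iff.1 hz with ⟨x, hx, rfl⟩ | ⟨m, hm, θ, hθ, rfl⟩
  · rw [Complex.arg_ofReal_of_nonneg hx.1.le]
    exact (one_div_mem_Ioc hn).1
  have hmn : (1:ℝ)/m = 1/n := by linarith [norm_arc m θ]
  have hθπ : θ ∈ Ioc (-Real.pi) Real.pi :=
    ⟨by linarith [hθ.1, Real.pi_pos], by linarith [hθ.2, (one_div_mem_Ioc hm).2, Real.pi_gt_three]⟩
  rw [arg_arc hm hθπ, ← hmn]
  exact hθ.2

lemma arc_one_div_notMem {n : ℕ} (hn : 2 ≤ n) : arc n (1/n) ∉ insert 1 A6 := by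
  have hpos := one_div_mem_Ioc hn
  rintro (h | h)
  · linarith [norm_arc n (1/n), congrArg norm h, norm_one (α := ℂ), hpos.1]
  · have hπ : (1:ℝ)/n ∈ Ioc (-Real.pi) Real.pi :=
      ⟨by linarith [Real.pi_pos, hpos.1], by linarith [hpos.2, Real.pi_gt_three]⟩
    have := arg_lt_of_norm_eq hn h (norm_arc n _)
    rw [arg_arc hn hπ] at this
    exact lt_irrefl _ this

lemma one_mem_closure : (1:ℂ) ∈ closure A6 := by
  have h1 : (1:ℝ) ∈ closure (Ioo 0 1) := by rw [closure_Ioo zero_ne_one]; simp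
  exact closure_mono subset_union_left
    (image_closure_subset_closure_image Complex.continuous_ofReal (mem_image_of_mem _ h1))

lemma isPreconnected : IsPreconnected A6 := by
  refine (isPreconnected_Ioo.image _ Complex.continuous_ofReal.continuousOn).union_biUnion
    (t := Ici 2) (fun n _ => isPreconnected_Ico.image _ (continuous_arc n).continuousOn)
    fun n hn => ?_
  have := one_div_mem_Ioc hn
  exact ⟨arc n 0, ⟨1 - 1/n, ⟨by linarith [this.2], by linarith [this.1]⟩, by simp [arc]⟩,
    0, ⟨le_rfl, this.1⟩, rfl⟩

lemma attached : Attached 1 A6 :=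
  ⟨A6, subset_unitDisc, ⟨insert_nonempty _ _, isPreconnected.subset_closure (subset_insert _ _)
    (insert_subset one_mem_closure subset_closure)⟩, 1, one_pos, rfl⟩

lemma not_isCompact_insert_inter_closure_ball {r : ℝ} (hr : 0 < r) :
    ¬ IsCompact (insert 1 A6 ∩ closure (ball 1 r)) := by
  intro hK
  obtain ⟨n, hn⟩ := exists_nat_gt (max 2 (2/r))
  have hn2 : 2 ≤ n := by exact_mod_cast (le_max_left _ _).trans hn.le
  have hnpos : (0:ℝ) < n := by exact_mod_cast (two_pos.trans_le hn2)
  have hnr : 2/(n:ℝ) < r := (div_lt_comm₀ hnpos hr).2 ((le_max_right _ _).trans_lt hn)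
  have harc : arc n '' Ico 0 (1/n) ⊆ insert 1 A6 ∩ closure (ball 1 r) := by
    rintro _ ⟨θ, hθ, rfl⟩
    refine ⟨mem_insert_of_mem _ (arc_mem hn2 hθ), subset_closure ?_⟩
    have : (2:ℝ)/n = 1/n + 1/n := by ring
    rw [mem_ball]
    linarith [dist_arc_one_le n θ, abs_of_nonneg hθ.1, hθ.2]
  have hend : arc n (1/n) ∈ closure (arc n '' Ico 0 (1/n)) := by
    refine image_closure_subset_closure_image (continuous_arc n) (mem_image_of_mem _ ?_)
    rw [closure_Ico (by positivity)]
    exact ⟨by positivity, le_rfl⟩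
  exact arc_one_div_notMem hn2 (hK.isClosed.closure_subset_iff.2 harc hend).1

end A6

theorem stmt6 :
    A6 ⊆ unitDisc ∧ (1:ℂ) ∈ closure A6 ∧ Attached 1 A6 ∧
    (∀ r > 0, ¬ IsCompact (insert (1:ℂ) A6 ∩ closure (ball (1:ℂ) r))) ∧
    ¬ Curvilinear 1 A6 := by
  refine ⟨A6.subset_unitDisc, A6.one_mem_closure, A6.attached,
    fun r hr => A6.not_isCompact_insert_inter_closure_ball hr, fun hcurv => ?_⟩
  obtain ⟨r, hK, hr⟩ := (hcurv.eventually_isCompact.and self_mem_nhdsWithin).exists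
  exact A6.not_isCompact_insert_inter_closure_ball hr hK
end
end

section
/- No approach region ending at a boundary point w of the unit disc can be both attached at w and end sequentially at w: the classes of attached and sequentially-ending approach regions at w are disjoint. -/
open Metric Set Filter

noncomputable section

def unitCircle : Set ℂ := {z | ‖z‖ = 1}

/-- `A` ends sequentially at `w`. -/
def SeqEnding (w : ℂ) (A : Set ℂ) : Prop :=
  ∃ φ : ℕ → ℂ, (∀ j, φ j ∈ unitDisc) ∧ Tendsto φ atTop (nhds w) ∧
    SameGerm w A (Set.range φ)

/-!
If `A` were attached at `w` through `S` and also had the germ of a sequence `φ` at `w`, then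
`S` would agree with the countable set `range φ` near `w`. But the distances to `w` from the
connected set `insert w S` fill an interval `[0, dist a w]` for each `a ∈ S`, and near `w`
only countably many of them occur; so `S ⊆ {w}`, i.e. `S = ∅` since `w ∉ S ⊆ D`. Then `A` is
empty near `w`, contradicting `w ∈ closure A`.
-/

open Topology

theorem sameGerm_iff_eventuallyEq {w : ℂ} {A S : Set ℂ} : SameGerm w A S ↔ A =ᶠ[𝓝 w] S := by
  simp only [SameGerm, eventuallyEq_set, Metric.eventually_nhds_iff_ball, Set.ext_iff,
    mem_inter_iff]
  refine exists_congr fun r => and_congr_right fun _ => ⟨fun h z hz => ?_, fun h z => ?_⟩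
  · simpa [hz] using h z
  · by_cases hz : z ∈ ball w r <;> simp [hz, h z]

theorem notMem_unitDisc_of_mem_unitCircle {w : ℂ} (hw : w ∈ unitCircle) : w ∉ unitDisc := by
  simp_all [unitDisc, unitCircle]

theorem IsPreconnected.subset_singleton_of_countable_inter_nhds {X : Type*} [MetricSpace X]
    {T U : Set X} {w : X} (hT : IsPreconnected T) (hwT : w ∈ T) (hU : U ∈ 𝓝 w)
    (hcount : (T ∩ U).Countable) : T ⊆ {w} := by
  intro a haT
  by_contra haw
  obtain ⟨r, hr, hrU⟩ := Metric.mem_nhds_iff.1 hU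
  have hdist : Icc 0 (dist a w) ⊆ (dist · w) '' T :=
    (hT.image _ (continuous_id.dist continuous_const).continuousOn).Icc_subset
      ⟨w, hwT, dist_self w⟩ ⟨a, haT, rfl⟩
  have hIoo : Ioo 0 (min (dist a w) r) ⊆ (dist · w) '' (T ∩ U) := by
    rintro s ⟨hs0, hs⟩
    obtain ⟨z, hzT, rfl⟩ := hdist ⟨hs0.le, hs.le.trans (min_le_left _ _)⟩
    exact ⟨z, ⟨hzT, hrU (mem_ball.2 (hs.trans_le (min_le_right _ _)))⟩, rfl⟩
  have := (hcount.image _).mono hIoo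
  rw [Cardinal.Real.Ioo_countable_iff] at this
  exact (lt_min (dist_pos.2 haw) hr).not_ge this

theorem stmt7_general (w : ℂ) (hw : w ∈ unitCircle) (A : Set ℂ)
    (hend : w ∈ closure A) :
    ¬ (Attached w A ∧ SeqEnding w A) := by
  rintro ⟨⟨S, hSD, hS, hAS⟩, φ, -, -, hAφ⟩
  rw [sameGerm_iff_eventuallyEq] at hAS hAφ
  have hSφ : S =ᶠ[𝓝 w] range φ := hAS.symm.trans hAφ
  have hS_w : insert w S ⊆ {w} := by
    refine hS.isPreconnected.subset_singleton_of_countable_inter_nhds (mem_insert w S)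
      (eventuallyEq_set.1 hSφ) (((countable_range φ).insert w).mono ?_)
    rintro z ⟨rfl | hzS, hzφ⟩
    exacts [mem_insert z _, mem_insert_of_mem w (hzφ.1 hzS)]
  have hwS : w ∉ S := fun h => notMem_unitDisc_of_mem_unitCircle hw (hSD h)
  refine mem_closure_iff_frequently.1 hend ?_
  filter_upwards [eventuallyEq_set.1 hAS] with z hz hzA
  obtain rfl := hS_w (mem_insert_of_mem w (hz.1 hzA))
  exact hwS (hz.1 hzA)

theorem stmt7 (w : ℂ) (hw : w ∈ unitCircle) (A : Set ℂ)
    (hA : A ⊆ unitDisc) (hend : w ∈ closure A) :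
    ¬ (Attached w A ∧ SeqEnding w A) :=
  stmt7_general w hw A hend
end
end

section
/- The approach region A = {(1 − n^{-2}) e^{i/n} : n ∈ ℕ}, which ends sequentially and tangentially at the boundary point 1 of the unit disc, is 2-projectively adjacent to 1: for every r > 0 there exists α_r > 0 such that the arc {e^{iθ} : 0 < θ < α_r} is contained in Γ_2^*(A ∩ B(1,r)). In particular, the classes of sequential, tangential, and projectively adjacent approach regions at 1 have nonempty intersection. -/
open Metric Set Filter

noncomputable section

def tau (w z : ℂ) : ℝ := (1 - ‖z‖) / ‖w - z‖

/-- `A^♮ = inf_{r>0} sup_{z ∈ A ∩ B(w,r)} τ(w,z)` -/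
def highTau (w : ℂ) (A : Set ℂ) : ℝ :=
  sInf ((fun r => sSup (tau w '' (A ∩ ball w r))) '' Ioi (0:ℝ))

def TangentialAt (w : ℂ) (A : Set ℂ) : Prop := highTau w A = 0

/-- The nontangential approach region `Γ_b(u)`. -/
def Gam (b : ℕ) (u : ℂ) : Set ℂ := {z ∈ unitDisc | 1 / (1 + (b:ℝ)) < tau u z}

/-- The shadow `Γ_b^*(U) = {u ∈ ∂D : Γ_b(u) ∩ U ≠ ∅}`. -/
def GamStar (b : ℕ) (U : Set ℂ) : Set ℂ :=
  {u ∈ unitCircle | (Gam b u ∩ U).Nonempty}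

/-- `J` is an arc of `∂D` with endpoint `w`. -/
def ArcWithEndpoint (w : ℂ) (J : Set ℂ) : Prop :=
  ∃ θ : ℝ, 0 < θ ∧ θ ≤ 2 * Real.pi ∧
    (J = (fun α : ℝ => w * Complex.exp (α * Complex.I)) '' Ioo 0 θ ∨
     J = (fun α : ℝ => w * Complex.exp (-(α * Complex.I))) '' Ioo 0 θ)

/-- `S ⇝ w` : `S` contains an arc with endpoint `w`. -/
def Adjacent (S : Set ℂ) (w : ℂ) : Prop := ∃ J, ArcWithEndpoint w J ∧ J ⊆ S

/-- `A` is projectively adjacent to `w`. -/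
def ProjAdjacent (w : ℂ) (A : Set ℂ) : Prop :=
  ∃ b : ℕ, ∀ r > 0, Adjacent (GamStar b (A ∩ ball w r)) w

/-- The sequence `z_n = (1 − n⁻²) e^{i/n}` (indexed so that `n ≥ 1`). -/
def seq12 (n : ℕ) : ℂ :=
  ((1 - 1/((n:ℝ)+1)^2 : ℝ) : ℂ) * Complex.exp (Complex.I / ((n:ℂ) + 1))


/-!
Write `z_n = (1 - φ²) e^{iφ}` with `φ = 1/(n+1)`: its depth below the circle is `φ²` while its
angle is `φ`. Given a small `θ > 0`, pick `k` with `1/(k+1) ≤ θ < 1/k`; then the angular gap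
`θ - 1/(k+1) < 1/(k(k+1))` is below twice the depth of `z_k`, so `|e^{iθ} - z_k| < 3·depth`, which
says `z_k ∈ Γ_2(e^{iθ})`, and `|1 - z_k| ≤ 2θ` is small. Tangentiality holds because
`|1 - z_n| ≍ φ` while `1 - |z_n| = φ²`, so `τ(1, z_n) = O(|1 - z_n|)`.
-/

open Complex Topology

lemma norm_exp_mul_I_sub_exp_mul_I_le (a b : ℝ) :
    ‖exp (a * I) - exp (b * I)‖ ≤ |a - b| := by
  have h : exp (a * I) - exp (b * I) = exp (b * I) * (exp (I * ↑(a - b)) - 1) := by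
    rw [mul_sub, mul_one, ← Complex.exp_add]
    push_cast; ring_nf
  rw [h, norm_mul, norm_exp_ofReal_mul_I, one_mul, ← Real.norm_eq_abs]
  exact Real.norm_exp_I_mul_ofReal_sub_one_le

section Polar

variable {θ φ δ : ℝ}

lemma norm_polar (φ : ℝ) (hδ : δ ≤ 1) : ‖((1 - δ : ℝ) : ℂ) * exp (φ * I)‖ = 1 - δ := by
  rw [norm_mul, norm_exp_ofReal_mul_I, mul_one, norm_real, Real.norm_of_nonneg (by linarith)]

lemma norm_exp_mul_I_sub_polar_le (θ φ δ : ℝ) :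
    ‖exp (θ * I) - ((1 - δ : ℝ) : ℂ) * exp (φ * I)‖ ≤ |θ - φ| + |δ| := by
  have h : exp (θ * I) - ((1 - δ : ℝ) : ℂ) * exp (φ * I)
      = (exp (θ * I) - exp (φ * I)) + (δ : ℂ) * exp (φ * I) := by
    push_cast; ring
  rw [h]
  refine (norm_add_le _ _).trans (add_le_add (norm_exp_mul_I_sub_exp_mul_I_le θ φ) ?_)
  rw [norm_mul, norm_exp_ofReal_mul_I, mul_one, norm_real, Real.norm_eq_abs]

lemma div_le_tau_exp_mul_I_polar (hδ₀ : 0 < δ) (hδ₁ : δ ≤ 1) :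
    δ / (|θ - φ| + δ) ≤ tau (exp (θ * I)) (((1 - δ : ℝ) : ℂ) * exp (φ * I)) := by
  have hd := norm_exp_mul_I_sub_polar_le θ φ δ
  rw [abs_of_pos hδ₀] at hd
  have hd₀ : 0 < ‖exp (θ * I) - ((1 - δ : ℝ) : ℂ) * exp (φ * I)‖ := by
    refine norm_pos_iff.mpr (sub_ne_zero.mpr fun h => ?_)
    have := norm_polar φ hδ₁
    rw [← h, norm_exp_ofReal_mul_I] at this
    linarith
  rw [tau, norm_polar φ hδ₁, sub_sub_cancel]
  exact div_le_div_of_nonneg_left hδ₀.le hd₀ hd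

lemma polar_mem_Gam_two (hδ₀ : 0 < δ) (hδ₁ : δ ≤ 1) (hθφ : |θ - φ| < 2 * δ) :
    ((1 - δ : ℝ) : ℂ) * exp (φ * I) ∈ Gam 2 (exp (θ * I)) := by
  refine ⟨?_, ?_⟩
  · show ‖_‖ < 1
    rw [norm_polar φ hδ₁]
    linarith
  · refine lt_of_lt_of_le ?_ (div_le_tau_exp_mul_I_polar hδ₀ hδ₁)
    rw [lt_div_iff₀ (by positivity)]
    norm_num
    linarith

end Polar

lemma tau_nonneg {w z : ℂ} (hz : ‖z‖ ≤ 1) : 0 ≤ tau w z :=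
  div_nonneg (sub_nonneg.mpr hz) (norm_nonneg _)

lemma tangentialAt_of_tau_le_mul_norm {w : ℂ} {A : Set ℂ} {C : ℝ} (hC : 0 ≤ C)
    (hA : ∀ z ∈ A, ‖z‖ ≤ 1) (hτ : ∀ z ∈ A, tau w z ≤ C * ‖w - z‖) : TangentialAt w A := by
  have hsup_nonneg : ∀ r, 0 ≤ sSup (tau w '' (A ∩ ball w r)) := fun r =>
    Real.sSup_nonneg (by rintro _ ⟨z, ⟨hz, -⟩, rfl⟩; exact tau_nonneg (hA z hz))
  have hsup_le : ∀ r > 0, sSup (tau w '' (A ∩ ball w r)) ≤ C * r := fun r hr =>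
    Real.sSup_le (by
      rintro _ ⟨z, ⟨hz, hzr⟩, rfl⟩
      rw [mem_ball, dist_comm, dist_eq_norm] at hzr
      exact (hτ z hz).trans (mul_le_mul_of_nonneg_left hzr.le hC)) (by positivity)
  have hbdd : BddBelow ((fun r => sSup (tau w '' (A ∩ ball w r))) '' Ioi (0 : ℝ)) :=
    ⟨0, by rintro _ ⟨r, -, rfl⟩; exact hsup_nonneg r⟩
  refine le_antisymm (le_of_forall_pos_le_add fun ε hε => ?_)
    (Real.sInf_nonneg (by rintro _ ⟨r, -, rfl⟩; exact hsup_nonneg r))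
  have hr : 0 < ε / (C + 1) := by positivity
  calc highTau w A ≤ sSup (tau w '' (A ∩ ball w (ε / (C + 1)))) := csInf_le hbdd ⟨_, hr, rfl⟩
    _ ≤ C * (ε / (C + 1)) := hsup_le _ hr
    _ ≤ 0 + ε := by
      rw [zero_add, mul_div_assoc', div_le_iff₀ (by linarith)]
      nlinarith

lemma exists_nat_lt_le_succ {x : ℝ} (hx : 1 < x) : ∃ k : ℕ, 0 < k ∧ (k : ℝ) < x ∧ x ≤ k + 1 := by
  have h1 : 1 < ⌈x⌉₊ := Nat.lt_ceil.mpr (by exact_mod_cast hx)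
  obtain ⟨k, hk⟩ := Nat.exists_eq_add_of_lt h1
  have hlt := Nat.ceil_lt_add_one (by linarith : 0 ≤ x)
  have hle := Nat.le_ceil x
  rw [hk] at hlt hle
  push_cast at hlt hle
  refine ⟨k + 1, k.succ_pos, ?_, ?_⟩ <;> push_cast <;> linarith

lemma adjacent_one_of_forall_exp_mul_I_mem {S : Set ℂ} {α : ℝ} (hα₀ : 0 < α)
    (hα : α ≤ 2 * Real.pi) (hS : ∀ θ : ℝ, 0 < θ → θ < α → exp (θ * I) ∈ S) : Adjacent S 1 :=
  ⟨_, ⟨α, hα₀, hα, Or.inl rfl⟩, by rintro _ ⟨θ, ⟨hθ₀, hθ⟩, rfl⟩; simpa using hS θ hθ₀ hθ⟩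

lemma seq12_eq_polar (n : ℕ) :
    seq12 n = ((1 - ((n : ℝ) + 1)⁻¹ ^ 2 : ℝ) : ℂ) * exp ((((n : ℝ) + 1)⁻¹ : ℝ) * I) := by
  rw [seq12, inv_pow, one_div]
  push_cast
  ring_nf

lemma inv_natCast_add_one_pos (n : ℕ) : 0 < ((n : ℝ) + 1)⁻¹ := by positivity

lemma inv_natCast_add_one_le_one (n : ℕ) : ((n : ℝ) + 1)⁻¹ ≤ 1 :=
  inv_le_one_of_one_le₀ (by linarith [n.cast_nonneg (α := ℝ)])

lemma norm_seq12 (n : ℕ) : ‖seq12 n‖ = 1 - ((n : ℝ) + 1)⁻¹ ^ 2 :=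
  seq12_eq_polar n ▸
    norm_polar _ (pow_le_one₀ (inv_natCast_add_one_pos n).le (inv_natCast_add_one_le_one n))

lemma norm_seq12_lt_one (n : ℕ) : ‖seq12 n‖ < 1 := by
  rw [norm_seq12]
  linarith [pow_pos (inv_natCast_add_one_pos n) 2]

lemma norm_one_sub_seq12_le (n : ℕ) : ‖1 - seq12 n‖ ≤ 2 * ((n : ℝ) + 1)⁻¹ := by
  have h := norm_exp_mul_I_sub_polar_le 0 ((n : ℝ) + 1)⁻¹ (((n : ℝ) + 1)⁻¹ ^ 2)
  rw [ofReal_zero, zero_mul, Complex.exp_zero, ← seq12_eq_polar, zero_sub, abs_neg,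
    abs_of_pos (inv_natCast_add_one_pos n),
    abs_of_pos (pow_pos (inv_natCast_add_one_pos n) 2)] at h
  nlinarith [inv_natCast_add_one_pos n, inv_natCast_add_one_le_one n]

lemma tendsto_seq12 : Tendsto seq12 atTop (𝓝 1) := by
  rw [tendsto_iff_norm_sub_tendsto_zero]
  refine squeeze_zero (fun n => norm_nonneg _) (fun n => ?_)
    (by simpa [one_div] using (tendsto_one_div_add_atTop_nhds_zero_nat (𝕜 := ℝ)).const_mul 2)
  rw [norm_sub_rev]
  exact norm_one_sub_seq12_le n

/-- For `n ≥ 1` this is read off from the imaginary part via Jordan's inequality `sin φ ≥ 2φ/π`. -/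
lemma inv_natCast_add_one_le_norm_one_sub_seq12 (n : ℕ) :
    ((n : ℝ) + 1)⁻¹ ≤ 8 / 3 * ‖1 - seq12 n‖ := by
  rcases Nat.eq_zero_or_pos n with rfl | hn
  · rw [seq12_eq_polar]
    norm_num
  set φ := ((n : ℝ) + 1)⁻¹ with hφ
  have hφ₀ : 0 < φ := inv_natCast_add_one_pos n
  have hφ₂ : φ ≤ 1 / 2 := by
    rw [hφ, inv_eq_one_div, div_le_div_iff₀ (by positivity) two_pos]
    have : (1 : ℝ) ≤ n := by exact_mod_cast hn
    linarith
  have hsin : φ / 2 ≤ Real.sin φ := by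
    have hπ : (1 : ℝ) / 2 ≤ 2 / Real.pi := by
      rw [div_le_div_iff₀ two_pos Real.pi_pos]
      linarith [Real.pi_le_four]
    have := Real.mul_le_sin hφ₀.le (by linarith [Real.pi_gt_three])
    nlinarith
  have him : (1 - seq12 n).im = -((1 - φ ^ 2) * Real.sin φ) := by
    rw [seq12_eq_polar, sub_im, one_im, im_ofReal_mul, exp_ofReal_mul_I_im]
    ring
  have hφ_sq : 3 / 4 ≤ 1 - φ ^ 2 := by nlinarith
  have him_ge : 3 / 4 * (φ / 2) ≤ (1 - φ ^ 2) * Real.sin φ :=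
    mul_le_mul hφ_sq hsin (by positivity) (by linarith)
  have hnorm := abs_im_le_norm (1 - seq12 n)
  rw [him, abs_neg, abs_of_nonneg (by linarith)] at hnorm
  linarith

lemma tau_one_seq12_le (n : ℕ) : tau 1 (seq12 n) ≤ 64 / 9 * ‖1 - seq12 n‖ := by
  have hφ := inv_natCast_add_one_le_norm_one_sub_seq12 n
  have hd : 0 < ‖1 - seq12 n‖ := by linarith [inv_natCast_add_one_pos n]
  rw [tau, norm_seq12, sub_sub_cancel, div_le_iff₀ hd]
  nlinarith [pow_le_pow_left₀ (inv_natCast_add_one_pos n).le hφ 2]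

lemma exists_seq12_mem_Gam_two {θ : ℝ} (hθ₀ : 0 < θ) (hθ₁ : θ < 1) :
    ∃ n, seq12 n ∈ Gam 2 (exp (θ * I)) ∧ ‖1 - seq12 n‖ ≤ 2 * θ := by
  obtain ⟨k, hk, hkθ, hθk⟩ := exists_nat_lt_le_succ (one_lt_inv₀ hθ₀ |>.mpr hθ₁)
  have hk' : (1 : ℝ) ≤ k := by exact_mod_cast hk
  have hφθ : ((k : ℝ) + 1)⁻¹ ≤ θ := inv_le_of_inv_le₀ hθ₀ hθk
  have hθk' : θ < (k : ℝ)⁻¹ := lt_inv_of_lt_inv₀ (by positivity) hkθ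
  have hgap : (k : ℝ)⁻¹ - ((k : ℝ) + 1)⁻¹ ≤ 2 * ((k : ℝ) + 1)⁻¹ ^ 2 := by
    rw [inv_sub_inv (by positivity) (by positivity), inv_pow, ← div_eq_mul_inv,
      div_le_div_iff₀ (by positivity) (by positivity)]
    nlinarith
  refine ⟨k, ?_, (norm_one_sub_seq12_le k).trans (by linarith)⟩
  rw [seq12_eq_polar]
  refine polar_mem_Gam_two (pow_pos (inv_natCast_add_one_pos k) 2)
    (pow_le_one₀ (inv_natCast_add_one_pos k).le (inv_natCast_add_one_le_one k)) ?_
  rw [abs_of_nonneg (by linarith)]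
  linarith

lemma exp_mul_I_mem_GamStar_two_seq12 {r θ : ℝ} (hθ₀ : 0 < θ) (hθ : θ < min 1 (r / 2)) :
    exp (θ * I) ∈ GamStar 2 (range seq12 ∩ ball 1 r) := by
  obtain ⟨n, hGam, hn⟩ := exists_seq12_mem_Gam_two hθ₀ (hθ.trans_le (min_le_left _ _))
  refine ⟨norm_exp_ofReal_mul_I θ, seq12 n, hGam, mem_range_self n, ?_⟩
  rw [mem_ball, dist_comm, dist_eq_norm]
  linarith [hθ.trans_le (min_le_right _ _)]

theorem stmt12 :
    (∀ r > 0, ∃ α > 0, ∀ θ : ℝ, 0 < θ → θ < α →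
      Complex.exp (θ * Complex.I) ∈ GamStar 2 (Set.range seq12 ∩ ball 1 r)) ∧
    SeqEnding 1 (Set.range seq12) ∧
    (1:ℂ) ∈ closure (Set.range seq12) ∧
    TangentialAt 1 (Set.range seq12) ∧
    ProjAdjacent 1 (Set.range seq12) := by
  have hα₀ : ∀ r > (0 : ℝ), 0 < min 1 (r / 2) := fun r hr => by positivity
  have hα : ∀ r : ℝ, min 1 (r / 2) ≤ 2 * Real.pi := fun r =>
    (min_le_left _ _).trans (by linarith [Real.pi_gt_three])
  refine ⟨fun r hr => ⟨_, hα₀ r hr, fun θ => exp_mul_I_mem_GamStar_two_seq12⟩,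
    ⟨seq12, norm_seq12_lt_one, tendsto_seq12, 1, one_pos, rfl⟩,
    mem_closure_of_tendsto tendsto_seq12 (.of_forall mem_range_self), ?_,
    2, fun r hr => adjacent_one_of_forall_exp_mul_I_mem (hα₀ r hr) (hα r)
      fun θ => exp_mul_I_mem_GamStar_two_seq12⟩
  refine tangentialAt_of_tau_le_mul_norm (C := 64 / 9) (by norm_num) ?_ ?_ <;> rintro _ ⟨n, rfl⟩
  · exact (norm_seq12_lt_one n).le
  · exact tau_one_seq12_le n
end
end

section
/- Let d(n) = 2^n and z_n = (1 − 4^{−d(n)}) exp(i·4^{−d(n−1)}) for n ∈ ℕ. Then A = {z_n : n ∈ ℕ} ends sequentially and tangentially at the boundary point 1 of the unit disc, but A is NOT projectively adjacent to 1: for every b ∈ ℕ there exists r > 0 such that the shadow Γ_b^*(A ∩ B(1,r)) contains no arc with endpoint 1. -/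
/-!
Write `t n = 4^(-2^n)`, so `t (n+1) = t n ^ 2` and `seq13 n = (1 - t n ^ 2) e^{i t n}`.
Since `|β - t| ≤ 3 |e^{iβ} - (1 - δ) e^{it}|`, the point `seq13 n` has `τ(e^{iβ}, ·) ≤ 6 t n`
as soon as `|β - t n| ≥ t n / 2`. With `β = 0` this gives tangency. For non-adjacency, the
angles `t n` are so sparse that `β = 2 t m`, or any small negative `β`, keeps distance `≥ t n / 2`
from every `t n`; near `1` we have `t n ≲ 1 / b`, so `e^{iβ}` lies outside the shadow.
-/

open Metric Set Filter

noncomputable section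

/-- `z_n = (1 − 4^{−2^n}) exp(i·4^{−2^{n−1}})`, indexed so that `n ≥ 1`:
`seq13 n` corresponds to the paper's `z_{n+1}`, with `d(n) = 2^n`. -/
def seq13 (n : ℕ) : ℂ :=
  ((1 - ((4:ℝ)⁻¹)^(2^(n+1)) : ℝ) : ℂ) *
    Complex.exp ((((4:ℝ)⁻¹)^(2^n) : ℝ) * Complex.I)

open Complex

lemma norm_exp_sub_mul_exp_sq (β t δ : ℝ) :
    ‖exp (β * I) - ((1 - δ : ℝ) : ℂ) * exp (t * I)‖ ^ 2
      = δ ^ 2 + 2 * (1 - δ) * (1 - Real.cos (β - t)) := by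
  rw [Complex.sq_norm, normSq_apply]
  simp only [sub_re, sub_im, mul_re, mul_im, exp_ofReal_mul_I_re, exp_ofReal_mul_I_im,
    ofReal_re, ofReal_im, Real.cos_sub]
  linear_combination Real.sin_sq_add_cos_sq β + (1 - δ) ^ 2 * Real.sin_sq_add_cos_sq t

lemma abs_sub_le_three_mul_norm_exp_sub {β t δ : ℝ} (hδ : δ ≤ 1 / 2)
    (hβt : |β - t| ≤ Real.pi) :
    |β - t| ≤ 3 * ‖exp (β * I) - ((1 - δ : ℝ) : ℂ) * exp (t * I)‖ := by
  have hcos := Real.cos_le_one_sub_mul_cos_sq hβt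
  have hπ : (1 : ℝ) / 8 ≤ 2 / Real.pi ^ 2 := by
    rw [le_div_iff₀ (by positivity)]
    nlinarith [Real.pi_le_four, Real.pi_pos]
  have hsq : (β - t) ^ 2 / 8 ≤ ‖exp (β * I) - ((1 - δ : ℝ) : ℂ) * exp (t * I)‖ ^ 2 := by
    rw [norm_exp_sub_mul_exp_sq]
    nlinarith [mul_le_mul_of_nonneg_right hπ (sq_nonneg (β - t))]
  rw [← sq_le_sq₀ (abs_nonneg _) (by positivity), sq_abs]
  nlinarith

lemma tau_nonneg_of_mem_unitDisc {w z : ℂ} (hz : z ∈ unitDisc) : 0 ≤ tau w z :=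
  div_nonneg (sub_nonneg.2 (le_of_lt hz)) (norm_nonneg _)

lemma tangentialAt_of_forall_tau_le {w : ℂ} {A : Set ℂ} (hA : A ⊆ unitDisc)
    (h : ∀ ε > 0, ∃ r > 0, ∀ z ∈ A ∩ ball w r, tau w z ≤ ε) : TangentialAt w A := by
  set F : ℝ → ℝ := fun r => sSup (tau w '' (A ∩ ball w r))
  have hF : ∀ x ∈ F '' Ioi 0, 0 ≤ x := by
    rintro _ ⟨r, -, rfl⟩
    exact Real.sSup_nonneg (by rintro _ ⟨z, hz, rfl⟩; exact tau_nonneg_of_mem_unitDisc (hA hz.1))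
  refine le_antisymm (le_of_forall_pos_le_add fun ε hε => ?_)
    (le_csInf ⟨F 1, 1, mem_Ioi.2 one_pos, rfl⟩ hF)
  obtain ⟨r, hr, hτ⟩ := h ε hε
  rw [zero_add]
  exact csInf_le_of_le ⟨0, hF⟩ ⟨r, hr, rfl⟩
    (Real.sSup_le (by rintro _ ⟨z, hz, rfl⟩; exact hτ z hz) hε.le)

lemma notMem_gamStar_of_forall_tau_le {b : ℕ} {U : Set ℂ} {u : ℂ}
    (h : ∀ z ∈ U, tau u z ≤ 1 / (1 + b)) : u ∉ GamStar b U := by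
  rintro ⟨-, z, ⟨-, hlt⟩, hz⟩
  linarith [h z hz]

def seq13Angle (n : ℕ) : ℝ := (4 : ℝ)⁻¹ ^ 2 ^ n

lemma seq13Angle_pos (n : ℕ) : 0 < seq13Angle n := by
  unfold seq13Angle; positivity

lemma seq13Angle_le_quarter (n : ℕ) : seq13Angle n ≤ 1 / 4 := by
  unfold seq13Angle
  simpa using pow_le_pow_of_le_one (a := (4 : ℝ)⁻¹) (by norm_num) (by norm_num)
    (Nat.one_le_two_pow (n := n))

lemma seq13Angle_le_quarter_mul_of_lt {m n : ℕ} (h : m < n) :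
    seq13Angle n ≤ seq13Angle m / 4 := by
  have hsq : seq13Angle n ≤ seq13Angle m ^ 2 := by
    rw [seq13Angle, seq13Angle, ← pow_mul, ← pow_succ]
    exact pow_le_pow_of_le_one (by norm_num) (by norm_num) (Nat.pow_le_pow_right two_pos h)
  nlinarith [seq13Angle_pos m, seq13Angle_le_quarter m]

lemma tendsto_seq13Angle_atTop : Tendsto seq13Angle atTop (nhds 0) :=
  (tendsto_pow_atTop_nhds_zero_of_lt_one (r := (4 : ℝ)⁻¹) (by norm_num) (by norm_num)).comp
    (tendsto_pow_atTop_atTop_of_one_lt one_lt_two)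

lemma seq13_eq (n : ℕ) :
    seq13 n = ((1 - seq13Angle n ^ 2 : ℝ) : ℂ) * exp (seq13Angle n * I) := by
  rw [seq13, seq13Angle, ← pow_mul, ← pow_succ]

lemma norm_seq13 (n : ℕ) : ‖seq13 n‖ = 1 - seq13Angle n ^ 2 := by
  rw [seq13_eq, norm_mul, norm_exp_ofReal_mul_I, mul_one, norm_real, Real.norm_eq_abs,
    abs_of_pos (by nlinarith [seq13Angle_pos n, seq13Angle_le_quarter n])]

lemma seq13_mem_unitDisc (n : ℕ) : seq13 n ∈ unitDisc := by
  simp only [unitDisc, mem_ofPred_eq, norm_seq13]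
  nlinarith [seq13Angle_pos n]

lemma tendsto_seq13 : Tendsto seq13 atTop (nhds 1) := by
  have hf : Continuous fun t : ℝ => ((1 - t ^ 2 : ℝ) : ℂ) * exp (t * I) := by fun_prop
  convert (hf.tendsto 0).comp tendsto_seq13Angle_atTop using 1
  · exact funext seq13_eq
  · simp

lemma abs_sub_seq13Angle_le {β : ℝ} {n : ℕ} (hβ : |β - seq13Angle n| ≤ Real.pi) :
    |β - seq13Angle n| ≤ 3 * ‖exp (β * I) - seq13 n‖ := by
  rw [seq13_eq]
  exact abs_sub_le_three_mul_norm_exp_sub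
    (by nlinarith [seq13Angle_pos n, seq13Angle_le_quarter n]) hβ

lemma abs_sub_seq13Angle_le_pi {β : ℝ} (hβ : |β| ≤ 1 / 2) (n : ℕ) :
    |β - seq13Angle n| ≤ Real.pi := by
  have := seq13Angle_pos n
  rw [abs_le] at hβ ⊢
  constructor <;> linarith [seq13Angle_le_quarter n, Real.pi_gt_three]

lemma seq13Angle_le_three_mul_norm_one_sub (n : ℕ) : seq13Angle n ≤ 3 * ‖1 - seq13 n‖ := by
  have hβ : |0 - seq13Angle n| = seq13Angle n := by
    rw [zero_sub, abs_neg, abs_of_pos (seq13Angle_pos n)]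
  have h := abs_sub_seq13Angle_le (abs_sub_seq13Angle_le_pi (β := 0) (by norm_num) n)
  rwa [hβ, ofReal_zero, zero_mul, exp_zero] at h

lemma tau_exp_seq13_le {β : ℝ} {n : ℕ} (hβ : |β - seq13Angle n| ≤ Real.pi)
    (hfar : seq13Angle n / 2 ≤ |β - seq13Angle n|) :
    tau (exp (β * I)) (seq13 n) ≤ 6 * seq13Angle n := by
  have ht := seq13Angle_pos n
  have hD := abs_sub_seq13Angle_le hβ
  rw [tau, norm_seq13, div_le_iff₀ (by linarith)]
  nlinarith

lemma half_seq13Angle_le_abs_two_mul_sub (m n : ℕ) :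
    seq13Angle n / 2 ≤ |2 * seq13Angle m - seq13Angle n| := by
  have hm := seq13Angle_pos m
  have hn := seq13Angle_pos n
  rcases lt_trichotomy m n with h | rfl | h
  · have := seq13Angle_le_quarter_mul_of_lt h
    rw [abs_of_pos (by linarith)]
    linarith
  · rw [abs_of_pos (by linarith)]
    linarith
  · have := seq13Angle_le_quarter_mul_of_lt h
    rw [abs_of_neg (by linarith)]
    linarith

lemma exists_exp_mem_far_from_seq13Angle {J : Set ℂ} (hJ : ArcWithEndpoint 1 J) :
    ∃ β : ℝ, exp (β * I) ∈ J ∧ |β| ≤ 1 / 2 ∧ ∀ n, seq13Angle n / 2 ≤ |β - seq13Angle n| := by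
  obtain ⟨θ, hθ, -, rfl | rfl⟩ := hJ
  · obtain ⟨m, hm⟩ := (tendsto_seq13Angle_atTop.eventually_lt_const (half_pos hθ)).exists
    have hm₀ := seq13Angle_pos m
    refine ⟨2 * seq13Angle m, ⟨2 * seq13Angle m, ⟨by positivity, by linarith⟩, one_mul _⟩,
      ?_, half_seq13Angle_le_abs_two_mul_sub m⟩
    rw [abs_of_pos (by positivity)]
    linarith [seq13Angle_le_quarter m]
  · set α := min (θ / 2) (1 / 2)
    have hα₀ : 0 < α := lt_min (half_pos hθ) one_half_pos
    have hαθ : α < θ := (min_le_left _ _).trans_lt (half_lt_self hθ)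
    refine ⟨-α, ⟨α, ⟨hα₀, hαθ⟩, by push_cast; ring_nf⟩, ?_, fun n => ?_⟩
    · rw [abs_neg, abs_of_pos hα₀]
      exact min_le_right _ _
    · have := seq13Angle_pos n
      rw [abs_of_neg (by linarith)]
      linarith

lemma exp_notMem_gamStar_seq13 (b : ℕ) {β : ℝ} (hβ : |β| ≤ 1 / 2)
    (hfar : ∀ n, seq13Angle n / 2 ≤ |β - seq13Angle n|) :
    exp (β * I) ∉ GamStar b (range seq13 ∩ ball 1 ((1 + b : ℝ)⁻¹ / 18)) := by
  refine notMem_gamStar_of_forall_tau_le ?_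
  rintro _ ⟨⟨n, rfl⟩, hball⟩
  have hnear : seq13Angle n < 3 * ((1 + b : ℝ)⁻¹ / 18) := by
    rw [mem_ball, dist_comm, dist_eq] at hball
    linarith [seq13Angle_le_three_mul_norm_one_sub n]
  rw [one_div]
  linarith [tau_exp_seq13_le (abs_sub_seq13Angle_le_pi hβ n) (hfar n)]

lemma not_adjacent_gamStar_seq13 (b : ℕ) :
    ∃ r > 0, ¬ Adjacent (GamStar b (range seq13 ∩ ball 1 r)) 1 := by
  refine ⟨(1 + b : ℝ)⁻¹ / 18, by positivity, fun ⟨J, hJ, hJsub⟩ => ?_⟩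
  obtain ⟨β, hβJ, hβ, hfar⟩ := exists_exp_mem_far_from_seq13Angle hJ
  exact exp_notMem_gamStar_seq13 b hβ hfar (hJsub hβJ)

lemma tangentialAt_one_seq13 : TangentialAt 1 (range seq13) := by
  refine tangentialAt_of_forall_tau_le (range_subset_iff.2 seq13_mem_unitDisc)
    fun ε hε => ⟨ε / 18, by positivity, ?_⟩
  rintro _ ⟨⟨n, rfl⟩, hball⟩
  rw [mem_ball, dist_comm, dist_eq] at hball
  have hn := seq13Angle_pos n
  have hτ := tau_exp_seq13_le (abs_sub_seq13Angle_le_pi (β := 0) (by norm_num) n)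
    (by rw [zero_sub, abs_neg, abs_of_pos hn]; linarith)
  rw [ofReal_zero, zero_mul, exp_zero] at hτ
  linarith [seq13Angle_le_three_mul_norm_one_sub n]

theorem stmt13 :
    (∀ n, seq13 n ∈ unitDisc) ∧
    Tendsto seq13 atTop (nhds 1) ∧
    SeqEnding 1 (Set.range seq13) ∧
    (1:ℂ) ∈ closure (Set.range seq13) ∧
    TangentialAt 1 (Set.range seq13) ∧
    (∀ b : ℕ, ∃ r > 0, ¬ Adjacent (GamStar b (Set.range seq13 ∩ ball 1 r)) 1) ∧
    ¬ ProjAdjacent 1 (Set.range seq13) := by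
  refine ⟨seq13_mem_unitDisc, tendsto_seq13,
    ⟨seq13, seq13_mem_unitDisc, tendsto_seq13, 1, one_pos, rfl⟩,
    mem_closure_of_tendsto tendsto_seq13 (.of_forall mem_range_self),
    tangentialAt_one_seq13, not_adjacent_gamStar_seq13, ?_⟩
  rintro ⟨b, hb⟩
  obtain ⟨r, hr, hno⟩ := not_adjacent_gamStar_seq13 b
  exact hno (hb r hr)
end
end

section
/- Every approach region that is attached at a boundary point w of the unit disc is projectively adjacent to w; together with the existence of projectively adjacent regions that end sequentially (hence are not attached), this shows the attached class is strictly contained in the projectively adjacent class. -/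
open Metric Set Filter

noncomputable section

/-!
Let `S` be the connected set representing `A` near `w`. If `S` has points `z` arbitrarily close
to `w` with `‖w - z‖ < (1 + b) (1 - ‖z‖)`, then every boundary point close enough to `w` has
such a `z` in its approach region `Γ_b`. Otherwise `S` is tangential near `w`, which forces
`‖w - z‖ ≤ 2 |arg (z / w)|` there. If the shadow missed points `w e^{iα}`, `w e^{iβ}` with
`β < 0 < α` arbitrarily close to `w`, then `S` could not meet the radii ending at them (a point
on the radius ending at `u` lies in `Γ_b(u)`), so, being connected, it would leave every small
disc about `w` through the thin sector `β < arg (z / w) < α`, where the tangential bound fails.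

The points `1 - 1 / (n + 1)` approach `1` radially, hence are projectively adjacent to it, but
they are countable, while a connected set through `1` and a point at distance `d` from `1` meets
every circle of radius `< d` about `1`.
-/

open Complex

lemma Complex.norm_sub_one_le_abs_norm_sub_one_add_abs_arg (ζ : ℂ) :
    ‖ζ - 1‖ ≤ |‖ζ‖ - 1| + |arg ζ| := by
  set e := exp (arg ζ * I)
  have hζ : ζ = ‖ζ‖ * e := (norm_mul_exp_arg_mul_I ζ).symm
  calc ‖ζ - 1‖ ≤ ‖ζ - e‖ + ‖e - 1‖ := norm_sub_le_norm_sub_add_norm_sub _ _ _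
    _ ≤ |‖ζ‖ - 1| + |arg ζ| := by
      gcongr
      · conv_lhs => rw [hζ]
        rw [← sub_one_mul, norm_mul, norm_exp_ofReal_mul_I, mul_one, ← ofReal_one,
          ← ofReal_sub, norm_real, Real.norm_eq_abs]
      · simpa [e, mul_comm] using Real.norm_exp_I_mul_ofReal_sub_one_le (x := arg ζ)

lemma norm_mul_exp_mul_I {w : ℂ} (θ : ℝ) : ‖w * exp (θ * I)‖ = ‖w‖ := by
  rw [norm_mul, norm_exp_ofReal_mul_I, mul_one]

lemma norm_sub_mul_exp_mul_I_le {w : ℂ} (hw : ‖w‖ = 1) (θ : ℝ) :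
    ‖w * exp (θ * I) - w‖ ≤ |θ| := by
  rw [← mul_sub_one, norm_mul, hw, one_mul, mul_comm]
  simpa using Real.norm_exp_I_mul_ofReal_sub_one_le (x := θ)

lemma norm_div_sub_one_of_norm_eq_one {w : ℂ} (hw : ‖w‖ = 1) (z : ℂ) :
    ‖z / w - 1‖ = ‖w - z‖ := by
  have hw0 : w ≠ 0 := ne_zero_of_norm_ne_zero (hw ▸ one_ne_zero)
  rw [div_sub_one hw0, norm_div, hw, div_one, norm_sub_rev]

lemma norm_sub_le_one_sub_norm_add_abs_arg {w z : ℂ} (hw : ‖w‖ = 1) (hz : ‖z‖ ≤ 1) :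
    ‖w - z‖ ≤ (1 - ‖z‖) + |arg (z / w)| := by
  have := norm_sub_one_le_abs_norm_sub_one_add_abs_arg (z / w)
  rwa [norm_div_sub_one_of_norm_eq_one hw, norm_div, hw, div_one,
    abs_of_nonpos (sub_nonpos.2 hz), neg_sub] at this

lemma norm_mul_exp_arg_div_mul_I_sub {w : ℂ} (hw : ‖w‖ = 1) (z : ℂ) :
    ‖w * exp (arg (z / w) * I) - z‖ = |1 - ‖z‖| := by
  have hw0 : w ≠ 0 := ne_zero_of_norm_ne_zero (hw ▸ one_ne_zero)
  have hz : w * (‖z‖ * exp (arg (z / w) * I)) = z := by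
    have h := norm_mul_exp_arg_mul_I (z / w)
    rw [norm_div, hw, div_one] at h
    rw [h, mul_div_cancel₀ _ hw0]
  have : w * exp (arg (z / w) * I) - z = w * exp (arg (z / w) * I) * (1 - ‖z‖ : ℝ) := by
    push_cast
    linear_combination hz
  rw [this, norm_mul, norm_mul_exp_mul_I, hw, one_mul, norm_real, Real.norm_eq_abs]

lemma mem_gam_iff {b : ℕ} {u z : ℂ} (hu : ‖u‖ = 1) (hz : z ∈ unitDisc) :
    z ∈ Gam b u ↔ ‖u - z‖ < (1 + b) * (1 - ‖z‖) := by
  have huz : 0 < ‖u - z‖ :=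
    norm_pos_iff.2 (sub_ne_zero.2 fun h => (h ▸ hz : ‖u‖ < 1).ne hu)
  simp only [Gam, tau, mem_ofPred_eq, hz, true_and]
  rw [div_lt_div_iff₀ (by positivity) huz, one_mul, mul_comm]

lemma gamStar_mono {b : ℕ} {U V : Set ℂ} (h : U ⊆ V) : GamStar b U ⊆ GamStar b V :=
  fun _ ⟨hu, z, hzu, hzU⟩ => ⟨hu, z, hzu, h hzU⟩

lemma Adjacent.mono {S T : Set ℂ} {w : ℂ} (hS : Adjacent S w) (h : S ⊆ T) : Adjacent T w :=
  let ⟨J, hJ, hJS⟩ := hS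
  ⟨J, hJ, hJS.trans h⟩

lemma adjacent_of_forall_pos_mem {T : Set ℂ} {w : ℂ} {θ : ℝ} (hθ : 0 < θ)
    (h : ∀ α ∈ Ioo 0 θ, w * exp (α * I) ∈ T) : Adjacent T w := by
  refine ⟨_, ⟨min θ (2 * Real.pi), lt_min hθ Real.two_pi_pos, min_le_right _ _, Or.inl rfl⟩, ?_⟩
  rintro _ ⟨α, hα, rfl⟩
  exact h α ⟨hα.1, hα.2.trans_le (min_le_left _ _)⟩

lemma adjacent_of_forall_neg_mem {T : Set ℂ} {w : ℂ} {θ : ℝ} (hθ : 0 < θ)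
    (h : ∀ α ∈ Ioo (-θ) 0, w * exp (α * I) ∈ T) : Adjacent T w := by
  refine ⟨_, ⟨min θ (2 * Real.pi), lt_min hθ Real.two_pi_pos, min_le_right _ _, Or.inr rfl⟩, ?_⟩
  rintro _ ⟨α, hα, rfl⟩
  simpa using h (-α) ⟨neg_lt_neg (hα.2.trans_le (min_le_left _ _)), neg_neg_of_pos hα.1⟩

lemma adjacent_gamStar_of_norm_sub_lt {b : ℕ} {U : Set ℂ} {w z : ℂ} (hw : ‖w‖ = 1)
    (hzU : z ∈ U) (hzD : z ∈ unitDisc) (hz : ‖w - z‖ < (1 + b) * (1 - ‖z‖)) :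
    Adjacent (GamStar b U) w := by
  refine adjacent_of_forall_pos_mem (sub_pos.2 hz) fun α hα => ?_
  have hu : ‖w * exp (α * I)‖ = 1 := by rw [norm_mul_exp_mul_I, hw]
  refine ⟨hu, z, (mem_gam_iff hu hzD).2 ?_, hzU⟩
  calc ‖w * exp (α * I) - z‖ ≤ ‖w * exp (α * I) - w‖ + ‖w - z‖ :=
        norm_sub_le_norm_sub_add_norm_sub _ _ _
    _ ≤ |α| + ‖w - z‖ := by gcongr; exact norm_sub_mul_exp_mul_I_le hw α
    _ < (1 + b) * (1 - ‖z‖) := by rw [abs_of_pos hα.1]; linarith [hα.2]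

lemma mul_exp_arg_div_mem_gamStar {b : ℕ} (hb : 0 < b) {U : Set ℂ} {w z : ℂ} (hw : ‖w‖ = 1)
    (hzU : z ∈ U) (hzD : z ∈ unitDisc) : w * exp (arg (z / w) * I) ∈ GamStar b U := by
  have hu : ‖w * exp (arg (z / w) * I)‖ = 1 := by rw [norm_mul_exp_mul_I, hw]
  refine ⟨hu, z, (mem_gam_iff hu hzD).2 ?_, hzU⟩
  have hz : 0 < 1 - ‖z‖ := sub_pos.2 hzD
  have hb' : (1 : ℝ) ≤ b := Nat.one_le_cast.2 hb
  rw [norm_mul_exp_arg_div_mul_I_sub hw, abs_of_pos hz]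
  nlinarith

lemma continuousOn_arg_div {w : ℂ} (hw : ‖w‖ = 1) :
    ContinuousOn (fun z => arg (z / w)) (ball w 1) :=
  fun z hz => ((continuousAt_arg (ball_one_subset_slitPlane (by
    rwa [mem_ball, dist_eq, norm_div_sub_one_of_norm_eq_one hw, norm_sub_rev, ← dist_eq]))).comp
    (continuous_id.div_const w).continuousAt).continuousWithinAt

lemma inter_ball_eq_of_le {X : Type*} [PseudoMetricSpace X] {A S : Set X} {w : X} {r r₀ : ℝ}
    (h : A ∩ ball w r₀ = S ∩ ball w r₀) (hr : r ≤ r₀) : A ∩ ball w r = S ∩ ball w r := by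
  rw [← inter_eq_right.2 (ball_subset_ball hr), ← inter_assoc, h, inter_assoc]

lemma IsPreconnected.exists_mem_annulus_of_ne {X : Type*} [PseudoMetricSpace X] {C : Set X}
    {g : X → ℝ} {w z₀ : X} {a b R R' : ℝ} (hC : IsPreconnected C) (hg : ContinuousOn g (ball w R'))
    (hR : 0 ≤ R) (hRR' : R < R') (hw : w ∈ C) (hgw : g w ∈ Ioo a b) (hz₀ : z₀ ∈ C)
    (hz₀R : R < dist z₀ w) (ha : ∀ z ∈ C ∩ ball w R', g z ≠ a)
    (hb : ∀ z ∈ C ∩ ball w R', g z ≠ b) :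
    ∃ z ∈ C, R < dist z w ∧ dist z w < R' ∧ g z ∈ Ioo a b := by
  set U := ball w R' ∩ g ⁻¹' Ioo a b
  set V := (closedBall w R)ᶜ ∪ (ball w R' ∩ g ⁻¹' Ioi b ∪ ball w R' ∩ g ⁻¹' Iio a)
  have hU : IsOpen U := hg.isOpen_inter_preimage isOpen_ball isOpen_Ioo
  have hV : IsOpen V := isClosed_closedBall.isOpen_compl.union
    ((hg.isOpen_inter_preimage isOpen_ball isOpen_Ioi).union
      (hg.isOpen_inter_preimage isOpen_ball isOpen_Iio))
  have hCUV : C ⊆ U ∪ V := by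
    intro z hz
    by_cases hzR : z ∈ closedBall w R
    · have hzR' : z ∈ ball w R' := closedBall_subset_ball hRR' hzR
      rcases lt_trichotomy (g z) a with h | h | h
      · exact Or.inr (Or.inr (Or.inr ⟨hzR', h⟩))
      · exact absurd h (ha z ⟨hz, hzR'⟩)
      rcases lt_trichotomy (g z) b with h' | h' | h'
      · exact Or.inl ⟨hzR', h, h'⟩
      · exact absurd h' (hb z ⟨hz, hzR'⟩)
      · exact Or.inr (Or.inr (Or.inl ⟨hzR', h'⟩))
    · exact Or.inr (Or.inl hzR)
  obtain ⟨z, hzC, ⟨hzR', hgz⟩, hzV⟩ := hC U V hU hV hCUV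
    ⟨w, hw, mem_ball_self (hR.trans_lt hRR'), hgw⟩ ⟨z₀, hz₀, Or.inl (by simpa using hz₀R)⟩
  refine ⟨z, hzC, ?_, hzR', hgz⟩
  rcases hzV with hzR | ⟨-, h⟩ | ⟨-, h⟩
  · simpa using hzR
  · exact absurd h hgz.2.not_gt
  · exact absurd h hgz.1.not_gt

lemma norm_sub_le_two_mul_abs_arg_div {b : ℕ} (hb : 0 < b) {w z : ℂ} (hw : ‖w‖ = 1)
    (hz : ‖z‖ ≤ 1) (htan : (1 + b) * (1 - ‖z‖) ≤ ‖w - z‖) : ‖w - z‖ ≤ 2 * |arg (z / w)| := by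
  have hb' : (1 : ℝ) ≤ b := Nat.one_le_cast.2 hb
  have := norm_sub_le_one_sub_norm_add_abs_arg hw hz
  nlinarith

lemma adjacent_gamStar_of_tangential {b : ℕ} (hb : 0 < b) {S : Set ℂ} {w z₀ : ℂ} {ρ : ℝ}
    (hw : ‖w‖ = 1) (hSD : S ⊆ unitDisc) (hS : IsPreconnected (insert w S))
    (hz₀ : z₀ ∈ S ∩ ball w ρ) (htan : ∀ z ∈ S ∩ ball w ρ, (1 + b) * (1 - ‖z‖) ≤ ‖w - z‖) :
    Adjacent (GamStar b (S ∩ ball w ρ)) w := by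
  set T := S ∩ ball w ρ
  set d := dist z₀ w
  have hz₀D : ‖z₀‖ < 1 := hSD hz₀.1
  have hd : 0 < d := dist_pos.2 fun h => (h ▸ hz₀D).ne hw
  have hd2 : d < 2 := by
    simp only [d, dist_eq]; linarith [norm_sub_le z₀ w]
  have hdρ : d < ρ := hz₀.2
  by_contra hno
  obtain ⟨α, hα, hαT⟩ : ∃ α ∈ Ioo 0 (d / 16), w * exp (α * I) ∉ GamStar b T := by
    by_contra! h; exact hno (adjacent_of_forall_pos_mem (by positivity) h)
  obtain ⟨β, hβ, hβT⟩ : ∃ β ∈ Ioo (-(d / 16)) 0, w * exp (β * I) ∉ GamStar b T := by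
    by_contra! h; exact hno (adjacent_of_forall_neg_mem (by positivity) h)
  set γ := α - β
  have hγ : 0 < γ := by linarith [hα.1, hβ.2]
  have hγd : 8 * γ < d := by linarith [hα.2, hβ.1]
  have hγρ : 3 * γ ≤ ρ := by linarith
  have hw0 : w ≠ 0 := ne_zero_of_norm_ne_zero (hw ▸ one_ne_zero)
  have hray : ∀ θ : ℝ, θ ≠ 0 → w * exp (θ * I) ∉ GamStar b T →
      ∀ z ∈ insert w S ∩ ball w (3 * γ), arg (z / w) ≠ θ := by
    rintro θ hθ0 hθ z ⟨rfl | hz, hzγ⟩ rfl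
    · simp [div_self hw0] at hθ0
    · exact hθ (mul_exp_arg_div_mem_gamStar hb hw ⟨hz, ball_subset_ball hγρ hzγ⟩ (hSD hz))
  obtain ⟨z, hzC, h2γ, h3γ, hgz⟩ :=
    hS.exists_mem_annulus_of_ne (a := β) (b := α) (R := 2 * γ) (R' := 3 * γ)
    ((continuousOn_arg_div hw).mono (ball_subset_ball (by linarith))) (by positivity)
    (by linarith) (mem_insert w S) (by simp [div_self hw0, hα.1, hβ.2])
    (mem_insert_of_mem w hz₀.1) (by linarith) (hray β hβ.2.ne hβT) (hray α hα.1.ne' hαT)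
  have hzS : z ∈ S := (mem_insert_iff.1 hzC).resolve_left fun h => by
    rw [h, dist_self] at h2γ; linarith
  have hzT : z ∈ T := ⟨hzS, ball_subset_ball hγρ h3γ⟩
  have hgzγ : |arg (z / w)| < γ := abs_lt.2 ⟨by linarith [hgz.1, hα.1], by linarith [hgz.2, hβ.2]⟩
  have hzw := norm_sub_le_two_mul_abs_arg_div hb hw (hSD hzS).le (htan z hzT)
  rw [dist_eq, norm_sub_rev] at h2γ
  linarith

theorem Attached.adjacent_gamStar {b : ℕ} (hb : 0 < b) {w : ℂ} {A : Set ℂ} (hA : Attached w A)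
    (hw : ‖w‖ = 1) (hwA : w ∈ closure A) {r : ℝ} (hr : 0 < r) :
    Adjacent (GamStar b (A ∩ ball w r)) w := by
  obtain ⟨S, hSD, hS, r₀, hr₀, hAS⟩ := hA
  by_cases hnt : ∀ ρ > 0, ∃ z ∈ S ∩ ball w ρ, ‖w - z‖ < (1 + b) * (1 - ‖z‖)
  · obtain ⟨z, hz, hzw⟩ := hnt (min r r₀) (lt_min hr hr₀)
    have hzA : z ∈ A ∩ ball w (min r r₀) := by
      rwa [inter_ball_eq_of_le hAS (min_le_right _ _)]
    exact adjacent_gamStar_of_norm_sub_lt hw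
      ⟨hzA.1, ball_subset_ball (min_le_left _ _) hzA.2⟩ (hSD hz.1) hzw
  · push Not at hnt
    obtain ⟨ρ, hρ, htan⟩ := hnt
    set r' := min (min r r₀) ρ
    have hAS' : A ∩ ball w r' = S ∩ ball w r' :=
      inter_ball_eq_of_le hAS ((min_le_left _ _).trans (min_le_right _ _))
    obtain ⟨z₀, hz₀A, hz₀w⟩ := Metric.mem_closure_iff.1 hwA r' (lt_min (lt_min hr hr₀) hρ)
    have hz₀ : z₀ ∈ S ∩ ball w r' := hAS' ▸ ⟨hz₀A, mem_ball_comm.1 hz₀w⟩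
    have := adjacent_gamStar_of_tangential hb hw hSD hS.isPreconnected hz₀
      fun z hz => htan z ⟨hz.1, ball_subset_ball (min_le_right _ _) hz.2⟩
    rw [← hAS'] at this
    exact this.mono (gamStar_mono (inter_subset_inter_right _
      (ball_subset_ball ((min_le_left _ _).trans (min_le_left _ _)))))

theorem Set.Countable.not_attached {w : ℂ} {A : Set ℂ} (hA : A.Countable) (hwA : w ∈ closure A)
    (hw : w ∉ A) : ¬ Attached w A := by
  rintro ⟨S, -, hS, r₀, hr₀, hAS⟩
  obtain ⟨z₀, hz₀A, hz₀w⟩ := Metric.mem_closure_iff.1 hwA r₀ hr₀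
  have hz₀ : z₀ ∈ S ∩ ball w r₀ := hAS ▸ ⟨hz₀A, mem_ball_comm.1 hz₀w⟩
  have hd : 0 < dist w z₀ := dist_pos.2 fun h => hw (h ▸ hz₀A)
  have hsub : Ioo 0 (dist w z₀) ⊆ dist w '' A := by
    intro s hs
    obtain ⟨z, hz, rfl⟩ := hS.isPreconnected.intermediate_value (f := dist w) (mem_insert w S)
      (mem_insert_of_mem w hz₀.1) (continuous_const.dist continuous_id).continuousOn
      ⟨by simpa using hs.1.le, hs.2.le⟩
    have hzS : z ∈ S := (mem_insert_iff.1 hz).resolve_left fun h => by simp [h] at hs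
    have hzA : z ∈ A ∩ ball w r₀ := hAS ▸ ⟨hzS, mem_ball_comm.1 (hs.2.trans hz₀w)⟩
    exact mem_image_of_mem _ hzA.1
  exact (Cardinal.Real.Ioo_countable_iff.1 ((hA.image _).mono hsub)).not_gt hd

def radialSeq (n : ℕ) : ℂ := ((1 - 1 / (n + 1) : ℝ) : ℂ)

lemma dist_radialSeq_one (n : ℕ) : dist (radialSeq n) 1 = 1 / (n + 1) := by
  rw [dist_eq, radialSeq, ← ofReal_one, ← ofReal_sub, norm_real, sub_sub_cancel_left, norm_neg,
    Real.norm_of_nonneg (by positivity)]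

lemma norm_radialSeq (n : ℕ) : ‖radialSeq n‖ = 1 - 1 / (n + 1) := by
  rw [radialSeq, norm_real, Real.norm_of_nonneg]
  rw [sub_nonneg, div_le_one (by positivity)]
  linarith [(n.cast_nonneg : (0 : ℝ) ≤ n)]

lemma radialSeq_mem_unitDisc (n : ℕ) : radialSeq n ∈ unitDisc := by
  change ‖radialSeq n‖ < 1
  rw [norm_radialSeq]
  linarith [(by positivity : (0 : ℝ) < 1 / (n + 1))]

lemma tendsto_radialSeq : Tendsto radialSeq atTop (nhds 1) :=
  tendsto_iff_dist_tendsto_zero.2 <| by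
    simpa only [dist_radialSeq_one] using tendsto_one_div_add_atTop_nhds_zero_nat

lemma projAdjacent_range_radialSeq : ProjAdjacent 1 (range radialSeq) := by
  refine ⟨1, fun r hr => ?_⟩
  obtain ⟨n, hn⟩ := (tendsto_radialSeq.eventually (ball_mem_nhds 1 hr)).exists
  refine adjacent_gamStar_of_norm_sub_lt norm_one ⟨mem_range_self n, hn⟩
    (radialSeq_mem_unitDisc n) ?_
  rw [← dist_eq, dist_comm, dist_radialSeq_one, norm_radialSeq]
  linarith [(by positivity : (0 : ℝ) < 1 / (n + 1))]

theorem stmt14 :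
    (∀ w : ℂ, w ∈ unitCircle → ∀ A : Set ℂ, A ⊆ unitDisc → w ∈ closure A →
      Attached w A → ProjAdjacent w A) ∧
    (∃ A : Set ℂ, A ⊆ unitDisc ∧ (1:ℂ) ∈ closure A ∧ SeqEnding 1 A ∧
      ProjAdjacent 1 A ∧ ¬ Attached 1 A) := by
  have hclosure : (1 : ℂ) ∈ closure (range radialSeq) :=
    mem_closure_of_tendsto tendsto_radialSeq (Eventually.of_forall mem_range_self)
  have hnotMem : (1 : ℂ) ∉ range radialSeq := fun ⟨n, hn⟩ =>
    absurd (radialSeq_mem_unitDisc n) (by simp [hn, unitDisc])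
  refine ⟨fun w hw A _ hwA hA => ⟨1, fun r hr => hA.adjacent_gamStar one_pos hw hwA hr⟩,
    range radialSeq, range_subset_iff.2 radialSeq_mem_unitDisc, hclosure,
    ⟨radialSeq, radialSeq_mem_unitDisc, tendsto_radialSeq, 1, one_pos, rfl⟩,
    projAdjacent_range_radialSeq, (countable_range radialSeq).not_attached hclosure hnotMem⟩
end
end
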